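/- arXiv:1603.06099 — 3 statements merged into one kernel-verified Lean document; each statement's English description precedes it below -/
import Mathlib

section
/- Let k ≥ 3 and let G be the k-sun graph. Then the Wiener index of G equals k(4k − 5); that is, the sum of the shortest-path distances d_G(u,v) over all unordered pairs {u,v} of distinct vertices of G equals k(4k − 5). -/
/-- The `k`-sun graph on vertex type `Fin k ⊕ Fin k`: `Sum.inl j` is the clique
vertex `c_j`, `Sum.inr i` is the independent-set vertex `s_i`, which is adjacent
exactly to `c_i` and `c_{i+1}` (indices modulo `k`). -/
def sunGraph (k : ℕ) : SimpleGraph (Fin k ⊕ Fin k) where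
  Adj u v :=
    match u, v with
    | Sum.inl i, Sum.inl j => i ≠ j
    | Sum.inl j, Sum.inr i => j = i ∨ (j : ℕ) = ((i : ℕ) + 1) % k
    | Sum.inr i, Sum.inl j => j = i ∨ (j : ℕ) = ((i : ℕ) + 1) % k
    | Sum.inr _, Sum.inr _ => False
  symm := by
    constructor
    intro u v h
    cases u <;> cases v <;> simp_all <;> tauto
  loopless := by
    constructor
    intro u
    cases u <;> simp

/-- The shortest-path distance in the `k`-sun graph as a function on
unordered pairs of vertices. -/
noncomputable def sunDist (k : ℕ) : Sym2 (Fin k ⊕ Fin k) → ℕ :=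
  Sym2.lift ⟨(sunGraph k).dist, fun _ _ => SimpleGraph.dist_comm⟩

open Sum Finset SimpleGraph

namespace SunAux

variable {k : ℕ}

lemma adj_inl_inl {i j : Fin k} : (sunGraph k).Adj (inl i) (inl j) ↔ i ≠ j := Iff.rfl
lemma adj_inl_inr {i j : Fin k} :
    (sunGraph k).Adj (inl j) (inr i) ↔ (j = i ∨ (j : ℕ) = ((i : ℕ) + 1) % k) := Iff.rfl
lemma adj_inr_inl {i j : Fin k} :
    (sunGraph k).Adj (inr i) (inl j) ↔ (j = i ∨ (j : ℕ) = ((i : ℕ) + 1) % k) := Iff.rfl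
lemma adj_inr_inr {i j : Fin k} : ¬ (sunGraph k).Adj (inr i) (inr j) := fun h => h

lemma val_cond [NeZero k] (hk : 3 ≤ k) (i j : Fin k) :
    (j : ℕ) = ((i : ℕ) + 1) % k ↔ j = i + 1 := by
  rw [Fin.ext_iff, Fin.val_add, Fin.val_one', Nat.mod_eq_of_lt (show 1 < k by omega)]

lemma adj_inl_inr' [NeZero k] (hk : 3 ≤ k) {i j : Fin k} :
    (sunGraph k).Adj (inl j) (inr i) ↔ (j = i ∨ j = i + 1) := by
  rw [adj_inl_inr, val_cond hk]
lemma adj_inr_inl' [NeZero k] (hk : 3 ≤ k) {i j : Fin k} :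
    (sunGraph k).Adj (inr i) (inl j) ↔ (j = i ∨ j = i + 1) := by
  rw [adj_inr_inl, val_cond hk]

lemma one_ne_zero' [NeZero k] (hk : 3 ≤ k) : (1 : Fin k) ≠ 0 := by
  rw [ne_eq, Fin.ext_iff, Fin.val_one', Fin.val_zero, Nat.mod_eq_of_lt (show 1 < k by omega)]
  omega

lemma two_ne_zero' [NeZero k] (hk : 3 ≤ k) : (1 : Fin k) + 1 ≠ 0 := by
  rw [ne_eq, Fin.ext_iff, Fin.val_add, Fin.val_one', Fin.val_zero,
    Nat.mod_eq_of_lt (show 1 < k by omega), Nat.mod_eq_of_lt (show 1 + 1 < k by omega)]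
  omega

lemma sun_connected [NeZero k] (hk : 3 ≤ k) : (sunGraph k).Connected := by
  have key : ∀ u : Fin k ⊕ Fin k, (sunGraph k).Reachable u (inl 0) := by
    intro u
    cases u with
    | inl a =>
      by_cases h : a = 0
      · exact h ▸ Reachable.refl _
      · exact (adj_inl_inl.2 h).reachable
    | inr i =>
      refine Reachable.trans (Adj.reachable (adj_inr_inl.2 (Or.inl rfl))) ?_
      by_cases h : i = 0
      · exact h ▸ Reachable.refl _
      · exact (adj_inl_inl.2 h).reachable
  haveI : Nonempty (Fin k ⊕ Fin k) := ⟨inl 0⟩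
  exact ⟨fun u v => (key u).trans (key v).symm⟩

def sunD (k : ℕ) [NeZero k] : Fin k ⊕ Fin k → Fin k ⊕ Fin k → ℕ
  | .inl i, .inl j => if i = j then 0 else 1
  | .inl i, .inr j => if i = j ∨ i = j + 1 then 1 else 2
  | .inr i, .inl j => if j = i ∨ j = i + 1 then 1 else 2
  | .inr i, .inr j => if i = j then 0 else if j = i + 1 ∨ i = j + 1 then 2 else 3

lemma dist_eq [NeZero k] (hk : 3 ≤ k) (u v : Fin k ⊕ Fin k) :
    (sunGraph k).dist u v = sunD k u v := by
  have hconn := sun_connected (k := k) hk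
  cases u with
  | inl i =>
    cases v with
    | inl j =>
      simp only [sunD]
      by_cases h : i = j
      · simp [h]
      · rw [if_neg h]
        exact dist_eq_one_iff_adj.2 (adj_inl_inl.2 h)
    | inr j =>
      simp only [sunD]
      by_cases h : i = j ∨ i = j + 1
      · rw [if_pos h]
        exact dist_eq_one_iff_adj.2 ((adj_inl_inr' hk).2 h)
      · rw [if_neg h]
        push_neg at h
        have hij : i ≠ j := h.1
        have hle : (sunGraph k).dist (inl i) (inr j) ≤ 2 := by
          simpa using dist_le (Walk.cons (adj_inl_inl.2 hij)
            (Walk.cons ((adj_inl_inr' hk).2 (Or.inl rfl)) Walk.nil))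
        have h0 : (sunGraph k).dist (inl i) (inr j) ≠ 0 :=
          Nat.pos_iff_ne_zero.mp (hconn.pos_dist_of_ne (by simp))
        have h1 : (sunGraph k).dist (inl i) (inr j) ≠ 1 := by
          rw [ne_eq, dist_eq_one_iff_adj, adj_inl_inr' hk]
          tauto
        omega
  | inr i =>
    cases v with
    | inl j =>
      rw [SimpleGraph.dist_comm (G := sunGraph k)]
      simp only [sunD]
      by_cases h : j = i ∨ j = i + 1
      · rw [if_pos h]
        exact dist_eq_one_iff_adj.2 ((adj_inl_inr' hk).2 h)
      · rw [if_neg h]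
        push_neg at h
        have hij : j ≠ i := h.1
        have hle : (sunGraph k).dist (inl j) (inr i) ≤ 2 := by
          simpa using dist_le (Walk.cons (adj_inl_inl.2 hij)
            (Walk.cons ((adj_inl_inr' hk).2 (Or.inl rfl)) Walk.nil))
        have h0 : (sunGraph k).dist (inl j) (inr i) ≠ 0 :=
          Nat.pos_iff_ne_zero.mp (hconn.pos_dist_of_ne (by simp))
        have h1 : (sunGraph k).dist (inl j) (inr i) ≠ 1 := by
          rw [ne_eq, dist_eq_one_iff_adj, adj_inl_inr' hk]
          tauto
        omega
    | inr j =>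
      simp only [sunD]
      by_cases hij : i = j
      · simp [hij]
      rw [if_neg hij]
      have h0 : (sunGraph k).dist (inr i) (inr j) ≠ 0 :=
        Nat.pos_iff_ne_zero.mp (hconn.pos_dist_of_ne (by simp [hij]))
      have h1 : (sunGraph k).dist (inr i) (inr j) ≠ 1 := by
        rw [ne_eq, dist_eq_one_iff_adj]
        exact adj_inr_inr
      by_cases hnear : j = i + 1 ∨ i = j + 1
      · rw [if_pos hnear]
        have hle : (sunGraph k).dist (inr i) (inr j) ≤ 2 := by
          rcases hnear with h | h
          · simpa using dist_le (Walk.cons ((adj_inr_inl' hk).2 (Or.inr rfl))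
              (Walk.cons ((adj_inl_inr' hk).2 (Or.inl h.symm)) Walk.nil))
          · simpa using dist_le (Walk.cons ((adj_inr_inl' hk).2 (Or.inl rfl))
              (Walk.cons ((adj_inl_inr' hk).2 (Or.inr h)) Walk.nil))
        omega
      · rw [if_neg hnear]
        push_neg at hnear
        have hle : (sunGraph k).dist (inr i) (inr j) ≤ 3 := by
          simpa using dist_le (Walk.cons ((adj_inr_inl' hk).2 (Or.inl rfl))
            (Walk.cons (adj_inl_inl.2 hij)
              (Walk.cons ((adj_inl_inr' hk).2 (Or.inl rfl)) Walk.nil)))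
        have h2 : (sunGraph k).dist (inr i) (inr j) ≠ 2 := by
          intro hd
          obtain ⟨p, hp⟩ := exists_walk_of_dist_ne_zero (G := sunGraph k) (by rw [hd]; norm_num)
          rw [hd] at hp
          cases p with
          | nil => simp at hp
          | @cons _ w _ h q =>
            cases q with
            | nil => simp at hp
            | @cons _ w2 _ h' q' =>
              simp only [Walk.length_cons] at hp
              have hw2 : w2 = inr j := (q'.eq_of_length_eq_zero (by omega)) ▸ rfl
              subst hw2
              cases w with
              | inr m => exact adj_inr_inr h
              | inl m =>
                rw [adj_inr_inl' hk] at h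
                rw [adj_inl_inr' hk] at h'
                rcases h with rfl | rfl <;> rcases h' with h' | h'
                · exact hij h'
                · exact hnear.2 h'
                · exact hnear.1 h'.symm
                · exact hij (by exact add_right_cancel h')
        omega


lemma helper_sum {α : Type*} (s : Finset α) (p : α → Prop) [DecidablePred p] (a b : ℕ) :
    ∑ x ∈ s, (if p x then a else b)
      = (s.filter p).card * a + (s.filter fun x => ¬ p x).card * b := by
  rw [Finset.sum_ite, Finset.sum_const, Finset.sum_const, smul_eq_mul, smul_eq_mul]

lemma self_ne_add_one [NeZero k] (hk : 3 ≤ k) (i : Fin k) : i ≠ i + 1 := fun h =>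
  SunAux.one_ne_zero' hk (left_eq_add.mp h)

lemma self_ne_sub_one [NeZero k] (hk : 3 ≤ k) (i : Fin k) : i ≠ i - 1 := fun h => by
  have h2 : i + 1 = i := by
    conv_lhs => rw [h]
    exact sub_add_cancel i 1
  exact SunAux.one_ne_zero' hk (left_eq_add.mp h2.symm)

lemma add_one_ne_sub_one [NeZero k] (hk : 3 ≤ k) (i : Fin k) : i + 1 ≠ i - 1 := fun h => by
  have h2 : i + (1 + 1) = i := by
    rw [← add_assoc]
    conv_lhs => rw [h]
    exact sub_add_cancel i 1
  exact SunAux.two_ne_zero' hk (left_eq_add.mp h2.symm)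

lemma card_neg_filter {α : Type*} [Fintype α] (p : α → Prop) [DecidablePred p] (n : ℕ)
    (h : (Finset.univ.filter p).card = n) :
    (Finset.univ.filter fun x => ¬ p x).card = Fintype.card α - n := by
  have := Finset.card_filter_add_card_filter_not (s := (Finset.univ : Finset α)) (p := p)
  rw [Finset.card_univ] at this
  omega

lemma rowA [NeZero k] (hk : 3 ≤ k) (i : Fin k) :
    ∑ j : Fin k, (if i = j then 0 else 1) = k - 1 := by
  rw [helper_sum]
  have h1 : (Finset.univ.filter fun j => i = j).card = 1 := by
    have : (Finset.univ.filter fun j => i = j) = {i} := by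
      ext j; simp [eq_comm]
    rw [this, Finset.card_singleton]
  rw [h1, card_neg_filter _ 1 h1, Fintype.card_fin]
  omega

lemma rowB [NeZero k] (hk : 3 ≤ k) (i : Fin k) :
    ∑ j : Fin k, (if j = i ∨ j = i + 1 then 1 else 2) = 2 * k - 2 := by
  rw [helper_sum]
  have h1 : (Finset.univ.filter fun j : Fin k => j = i ∨ j = i + 1).card = 2 := by
    have : (Finset.univ.filter fun j : Fin k => j = i ∨ j = i + 1) = {i, i + 1} := by
      ext j; simp
    rw [this, Finset.card_pair (self_ne_add_one hk i)]
  rw [h1, card_neg_filter _ 2 h1, Fintype.card_fin]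
  omega

lemma rowB' [NeZero k] (hk : 3 ≤ k) (i : Fin k) :
    ∑ j : Fin k, (if i = j ∨ i = j + 1 then 1 else 2) = 2 * k - 2 := by
  rw [helper_sum]
  have h1 : (Finset.univ.filter fun j : Fin k => i = j ∨ i = j + 1).card = 2 := by
    have : (Finset.univ.filter fun j : Fin k => i = j ∨ i = j + 1) = {i, i - 1} := by
      ext j
      simp only [Finset.mem_filter, Finset.mem_univ, true_and, Finset.mem_insert,
        Finset.mem_singleton]
      constructor
      · rintro (rfl | h)
        · exact Or.inl rfl
        · exact Or.inr (eq_sub_of_add_eq h.symm)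
      · rintro (rfl | rfl)
        · exact Or.inl rfl
        · exact Or.inr (by rw [sub_add_cancel])
    rw [this, Finset.card_pair (self_ne_sub_one hk i)]
  rw [h1, card_neg_filter _ 2 h1, Fintype.card_fin]
  omega

lemma rowC [NeZero k] (hk : 3 ≤ k) (i : Fin k) :
    ∑ j : Fin k, (if i = j then 0 else if j = i + 1 ∨ i = j + 1 then 2 else 3) = 3 * k - 5 := by
  rw [Finset.sum_ite, Finset.sum_const_zero, zero_add]
  set s := Finset.univ.filter (fun j : Fin k => ¬ i = j) with hs
  rw [helper_sum]
  have hcs : s.card = k - 1 := by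
    rw [hs, card_neg_filter _ 1 ?h, Fintype.card_fin]
    case h =>
      have h1 : (Finset.univ.filter fun j => i = j) = {i} := by ext j; simp [eq_comm]
      rw [h1]; exact Finset.card_singleton i
  have h2 : (s.filter fun j => j = i + 1 ∨ i = j + 1) = {i + 1, i - 1} := by
    ext j
    rw [hs]
    simp only [Finset.mem_filter, Finset.filter_filter, Finset.mem_univ, true_and,
      Finset.mem_insert, Finset.mem_singleton]
    constructor
    · rintro ⟨hne, (rfl | h)⟩
      · exact Or.inl rfl
      · exact Or.inr (eq_sub_of_add_eq h.symm)
    · rintro (rfl | rfl)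
      · exact ⟨fun h => self_ne_add_one hk i h, Or.inl rfl⟩
      · refine ⟨fun h => self_ne_sub_one hk i h, Or.inr ?_⟩
        rw [sub_add_cancel]
  have hc2 : (s.filter fun j => j = i + 1 ∨ i = j + 1).card = 2 := by
    rw [h2, Finset.card_pair (add_one_ne_sub_one hk i)]
  have hc3 : (s.filter fun j => ¬ (j = i + 1 ∨ i = j + 1)).card = k - 3 := by
    have := Finset.card_filter_add_card_filter_not (s := s)
      (p := fun j => j = i + 1 ∨ i = j + 1)
    omega
  rw [hc2, hc3]
  omega

lemma total [NeZero k] (hk : 3 ≤ k) :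
    ∑ u : Fin k ⊕ Fin k, ∑ v : Fin k ⊕ Fin k, sunD k u v = 2 * (k * (4 * k - 5)) := by
  rw [Fintype.sum_sum_type]
  simp only [Fintype.sum_sum_type, sunD]
  have e1 : ∀ i : Fin k, ∑ j : Fin k, (if i = j then 0 else 1) = k - 1 := rowA hk
  have rA : ∑ i : Fin k, ((∑ j : Fin k, (if i = j then 0 else 1))
      + ∑ j : Fin k, (if i = j ∨ i = j + 1 then 1 else 2)) = k * ((k - 1) + (2 * k - 2)) := by
    rw [Finset.sum_congr rfl fun i _ => by rw [rowA hk i, rowB' hk i]]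
    rw [Finset.sum_const, Finset.card_univ, Fintype.card_fin, smul_eq_mul]
  have rB : ∑ i : Fin k, ((∑ j : Fin k, (if j = i ∨ j = i + 1 then 1 else 2))
      + ∑ j : Fin k, (if i = j then 0 else if j = i + 1 ∨ i = j + 1 then 2 else 3))
      = k * ((2 * k - 2) + (3 * k - 5)) := by
    rw [Finset.sum_congr rfl fun i _ => by rw [rowB hk i, rowC hk i]]
    rw [Finset.sum_const, Finset.card_univ, Fintype.card_fin, smul_eq_mul]
  rw [rA, rB]
  obtain ⟨m, rfl⟩ : ∃ m, k = m + 3 := ⟨k - 3, by omega⟩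
  have e1 : m + 3 - 1 = m + 2 := by omega
  have e2 : 2 * (m + 3) - 2 = 2 * m + 4 := by omega
  have e3 : 3 * (m + 3) - 5 = 3 * m + 4 := by omega
  have e4 : 4 * (m + 3) - 5 = 4 * m + 7 := by omega
  rw [e1, e2, e3, e4]
  ring


lemma sunD_self [NeZero k] (u : Fin k ⊕ Fin k) : sunD k u u = 0 := by
  cases u <;> simp [sunD]

lemma fiber_card {α : Type*} [DecidableEq α] [Fintype α] (j : Sym2 α) (hj : ¬ j.IsDiag) :
    ((Finset.univ.offDiag).filter fun i => Sym2.mk.uncurry i = j).card = 2 := by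
  induction j using Sym2.ind with
  | _ a b =>
    rw [Sym2.mk_isDiag_iff] at hj
    have h : ((Finset.univ.offDiag).filter fun i : α × α => Sym2.mk.uncurry i = s(a, b))
        = {(a, b), (b, a)} := by
      ext ⟨x, y⟩
      simp only [Finset.mem_filter, Finset.mem_offDiag, Finset.mem_univ, true_and,
        Finset.mem_insert, Finset.mem_singleton, Function.uncurry_apply_pair, Sym2.eq_iff, Prod.mk.injEq]
      constructor
      · rintro ⟨hxy, (⟨rfl, rfl⟩ | ⟨rfl, rfl⟩)⟩ <;> tauto
      · rintro (⟨rfl, rfl⟩ | ⟨rfl, rfl⟩) <;> exact ⟨by tauto, by tauto⟩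
    rw [h, Finset.card_pair (by simp [Prod.ext_iff]; tauto)]

end SunAux

open SunAux in
/-- For `k ≥ 3`, the Wiener index of the `k`-sun graph, i.e. the sum of the
shortest-path distances over all unordered pairs of distinct vertices,
equals `k * (4 * k - 5)`. -/
theorem sunGraph_wienerIndex (k : ℕ) (hk : 3 ≤ k) :
    ∑ e ∈ Finset.univ.filter (fun e : Sym2 (Fin k ⊕ Fin k) => ¬ e.IsDiag),
      sunDist k e = k * (4 * k - 5) := by
  classical
  haveI : NeZero k := ⟨by omega⟩
  have key := Finset.sum_fiberwise' (s := (Finset.univ : Finset (Fin k ⊕ Fin k)).offDiag)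
    (g := Sym2.mk.uncurry) (f := sunDist k)
  have hA : ∑ i ∈ (Finset.univ : Finset (Fin k ⊕ Fin k)).offDiag, sunDist k (Sym2.mk.uncurry i)
      = 2 * (k * (4 * k - 5)) := by
    have hstep : ∑ i ∈ (Finset.univ : Finset (Fin k ⊕ Fin k)).offDiag, sunDist k (Sym2.mk.uncurry i)
        = ∑ i ∈ Finset.univ ×ˢ Finset.univ, sunD k i.1 i.2 := by
      rw [Finset.sum_congr rfl (fun i _ => show sunDist k (Sym2.mk.uncurry i) = sunD k i.1 i.2 from by
        rw [show Sym2.mk.uncurry i = s(i.1, i.2) from rfl]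
        show (sunGraph k).dist i.1 i.2 = _
        exact dist_eq hk i.1 i.2)]
      refine Finset.sum_subset (fun x hx => ?_) (fun x hx hnx => ?_)
      · simp
      · have : x.1 = x.2 := by
          by_contra hne
          exact hnx (by simp [Finset.mem_offDiag, hne])
        rw [this, sunD_self]
    rw [hstep, Finset.sum_product, ← total hk]
  rw [hA] at key
  have hB : ∑ j : Sym2 (Fin k ⊕ Fin k),
      ∑ _i ∈ (Finset.univ.offDiag).filter (fun i => Sym2.mk.uncurry i = j), sunDist k j
      = 2 * ∑ e ∈ Finset.univ.filter (fun e : Sym2 (Fin k ⊕ Fin k) => ¬ e.IsDiag), sunDist k e := by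
    rw [← Finset.sum_filter_add_sum_filter_not Finset.univ (fun e : Sym2 (Fin k ⊕ Fin k) => ¬ e.IsDiag)]
    have hdiag : ∑ j ∈ Finset.univ.filter (fun e : Sym2 (Fin k ⊕ Fin k) => ¬ ¬ e.IsDiag),
        ∑ _i ∈ (Finset.univ.offDiag).filter (fun i => Sym2.mk.uncurry i = j), sunDist k j = 0 := by
      refine Finset.sum_eq_zero fun j hj => ?_
      rw [Finset.mem_filter, not_not] at hj
      have : ((Finset.univ.offDiag).filter
          (fun i : (Fin k ⊕ Fin k) × (Fin k ⊕ Fin k) => Sym2.mk.uncurry i = j)) = ∅ := by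
        refine Finset.filter_false_of_mem fun i hi => ?_
        intro hmk
        rw [Finset.mem_offDiag] at hi
        have : (Sym2.mk.uncurry i).IsDiag := hmk ▸ hj.2
        rw [show Sym2.mk.uncurry i = s(i.1, i.2) from rfl, Sym2.mk_isDiag_iff] at this
        exact hi.2.2 this
      rw [this, Finset.sum_empty]
    rw [hdiag, add_zero, Finset.mul_sum]
    refine Finset.sum_congr rfl fun j hj => ?_
    rw [Finset.mem_filter] at hj
    rw [Finset.sum_const, fiber_card j hj.2, smul_eq_mul]
  rw [hB] at key
  omega
end

section
/- Let k ≥ 3, let G be the k-sun graph, and let s_i be any one of the independent-set vertices of G. Then the sum of the shortest-path distances from s_i to all other vertices of G equals 5k − 7. -/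
section Aux

variable {V : Type*} {G : SimpleGraph V} {u v w : V}

lemma sun_dist_eq_two' (hne : u ≠ v) (hna : ¬ G.Adj u v)
    (h1 : G.Adj u w) (h2 : G.Adj w v) : G.dist u v = 2 := by
  have hle : G.dist u v ≤ 2 := by
    have := G.dist_le (SimpleGraph.Walk.cons h1 (SimpleGraph.Walk.cons h2 SimpleGraph.Walk.nil))
    simpa using this
  have h0 : G.dist u v ≠ 0 := by
    rw [SimpleGraph.dist_ne_zero_iff_ne_and_reachable]
    exact ⟨hne, ⟨SimpleGraph.Walk.cons h1 (SimpleGraph.Walk.cons h2 SimpleGraph.Walk.nil)⟩⟩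
  have h1' : G.dist u v ≠ 1 := fun h => hna (SimpleGraph.dist_eq_one_iff_adj.mp h)
  omega

lemma sun_dist_eq_three' {a b : V} (hne : u ≠ v) (hna : ¬ G.Adj u v)
    (hcom : ∀ w, G.Adj u w → ¬ G.Adj w v)
    (h1 : G.Adj u a) (h2 : G.Adj a b) (h3 : G.Adj b v) : G.dist u v = 3 := by
  have hle : G.dist u v ≤ 3 := by
    have := G.dist_le (SimpleGraph.Walk.cons h1 (SimpleGraph.Walk.cons h2
      (SimpleGraph.Walk.cons h3 SimpleGraph.Walk.nil)))
    simpa using this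
  have hr : G.Reachable u v :=
    ⟨SimpleGraph.Walk.cons h1 (SimpleGraph.Walk.cons h2
      (SimpleGraph.Walk.cons h3 SimpleGraph.Walk.nil))⟩
  have h0 : G.dist u v ≠ 0 := by
    rw [SimpleGraph.dist_ne_zero_iff_ne_and_reachable]; exact ⟨hne, hr⟩
  have h1' : G.dist u v ≠ 1 := fun h => hna (SimpleGraph.dist_eq_one_iff_adj.mp h)
  have h2' : G.dist u v ≠ 2 := by
    intro h
    obtain ⟨p, hp⟩ := hr.exists_walk_length_eq_dist
    rw [h] at hp
    cases p with
    | nil => simp at hp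
    | cons ha q =>
      cases q with
      | nil => simp at hp
      | cons hb r =>
        cases r with
        | nil => exact hcom _ ha hb
        | cons hc r' => simp [SimpleGraph.Walk.length_cons] at hp
  omega

end Aux

section SunLemmas

variable {k : ℕ} [NeZero k]

lemma sun_val_add_one (hk : 3 ≤ k) (i : Fin k) :
    ((i + 1 : Fin k) : ℕ) = ((i : ℕ) + 1) % k := by
  rw [Fin.add_def, Fin.val_one']
  conv_rhs => rw [Nat.add_mod]
  rw [Nat.mod_eq_of_lt i.isLt]

lemma sun_adj_inr_inl (hk : 3 ≤ k) (i j : Fin k) :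
    (sunGraph k).Adj (Sum.inr i) (Sum.inl j) ↔ j = i ∨ j = i + 1 := by
  show j = i ∨ (j : ℕ) = ((i : ℕ) + 1) % k ↔ _
  rw [← sun_val_add_one hk i, Fin.val_eq_val]

lemma sun_adj_inl_inr (hk : 3 ≤ k) (i j : Fin k) :
    (sunGraph k).Adj (Sum.inl j) (Sum.inr i) ↔ j = i ∨ j = i + 1 := by
  show j = i ∨ (j : ℕ) = ((i : ℕ) + 1) % k ↔ _
  rw [← sun_val_add_one hk i, Fin.val_eq_val]

lemma sun_adj_inl_inl (i j : Fin k) :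
    (sunGraph k).Adj (Sum.inl i) (Sum.inl j) ↔ i ≠ j := Iff.rfl

lemma sun_not_adj_inr_inr (i j : Fin k) :
    ¬ (sunGraph k).Adj (Sum.inr i) (Sum.inr j) := fun h => h

lemma sun_one_ne_zero (hk : 3 ≤ k) : (1 : Fin k) ≠ 0 := by
  intro h
  have := congrArg Fin.val h
  rw [Fin.val_one', Fin.val_zero, Nat.mod_eq_of_lt (by omega)] at this
  omega

lemma sun_succ_ne (hk : 3 ≤ k) (i : Fin k) : i + 1 ≠ i := by
  intro h
  exact sun_one_ne_zero hk (by
    have := congrArg (· - i) h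
    simpa using this)

lemma sun_pred_ne (hk : 3 ≤ k) (i : Fin k) : i - 1 ≠ i := by
  intro h
  rw [sub_eq_self] at h
  exact sun_one_ne_zero hk h

lemma sun_two_ne_zero (hk : 3 ≤ k) : (1 : Fin k) + 1 ≠ 0 := by
  intro h
  have h' := congrArg Fin.val h
  rw [Fin.add_def] at h'
  simp only [Fin.val_mk, Fin.val_one', Fin.val_zero] at h'
  rw [Nat.mod_eq_of_lt (show 1 < k by omega)] at h'
  rw [Nat.mod_eq_of_lt (show 1 + 1 < k by omega)] at h'
  omega

lemma sun_succ_ne_pred (hk : 3 ≤ k) (i : Fin k) : i + 1 ≠ i - 1 := by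
  intro h
  apply sun_two_ne_zero hk
  have h2 : (1 : Fin k) = -1 := by
    have := congrArg (fun x => x - i) h
    simpa [add_sub_cancel_left, sub_sub_eq_add_sub] using this
  nth_rewrite 1 [h2]
  exact neg_add_cancel 1

lemma sun_dist_inl (hk : 3 ≤ k) (i j : Fin k) :
    (sunGraph k).dist (Sum.inr i) (Sum.inl j)
      = if j = i ∨ j = i + 1 then 1 else 2 := by
  split_ifs with h
  · exact SimpleGraph.dist_eq_one_iff_adj.mpr ((sun_adj_inr_inl hk i j).mpr h)
  · push_neg at h
    exact sun_dist_eq_two' (by simp)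
      (fun ha => ((sun_adj_inr_inl hk i j).mp ha).elim h.1 h.2)
      (w := Sum.inl i) ((sun_adj_inr_inl hk i i).mpr (Or.inl rfl))
      ((sun_adj_inl_inl i j).mpr (fun hij => h.1 hij.symm))

lemma sun_dist_inr (hk : 3 ≤ k) (i j : Fin k) :
    (sunGraph k).dist (Sum.inr i) (Sum.inr j)
      = if j = i then 0 else if j = i + 1 ∨ j = i - 1 then 2 else 3 := by
  split_ifs with h0 h2
  · rw [h0]; exact SimpleGraph.dist_self
  · have hne : (Sum.inr i : Fin k ⊕ Fin k) ≠ Sum.inr j := by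
      simpa using fun hij => h0 hij.symm
    rcases h2 with h2 | h2
    · exact sun_dist_eq_two' hne (sun_not_adj_inr_inr i j)
        (w := Sum.inl (i + 1)) ((sun_adj_inr_inl hk i (i + 1)).mpr (Or.inr rfl))
        ((sun_adj_inl_inr hk j (i + 1)).mpr (Or.inl h2.symm))
    · refine sun_dist_eq_two' hne (sun_not_adj_inr_inr i j)
        (w := Sum.inl i) ((sun_adj_inr_inl hk i i).mpr (Or.inl rfl))
        ((sun_adj_inl_inr hk j i).mpr (Or.inr ?_))
      rw [h2]; rw [sub_add_cancel]
  · push_neg at h2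
    refine sun_dist_eq_three' (by simpa using fun hij => h0 hij.symm)
      (sun_not_adj_inr_inr i j) ?_
      (a := Sum.inl i) (b := Sum.inl j)
      ((sun_adj_inr_inl hk i i).mpr (Or.inl rfl))
      ((sun_adj_inl_inl i j).mpr (fun hij => h0 hij.symm))
      ((sun_adj_inl_inr hk j j).mpr (Or.inl rfl))
    intro w hw hw'
    cases w with
    | inr w => exact hw
    | inl w =>
      rcases (sun_adj_inr_inl hk i w).mp hw with rfl | rfl <;>
        rcases (sun_adj_inl_inr hk j _).mp hw' with h' | h'
      · exact h0 h'.symm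
      · exact h2.2 (by rw [h', add_sub_cancel_right])
      · exact h2.1 h'.symm
      · exact h0 (add_right_cancel h').symm

end SunLemmas

/-- For `k ≥ 3` and any independent-set vertex `s_i` of the `k`-sun graph, the sum
of the shortest-path distances from `s_i` to all other vertices equals `5 * k - 7`. -/
theorem sunGraph_distSum_independent (k : ℕ) (hk : 3 ≤ k) (i : Fin k) :
    ∑ v : Fin k ⊕ Fin k, (sunGraph k).dist (Sum.inr i) v = 5 * k - 7 := by
  haveI : NeZero k := ⟨by omega⟩
  rw [Fintype.sum_sum_type]
  have hcard : (Finset.univ : Finset (Fin k)).card = k := by simp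
  have hS1 : (∑ j : Fin k, (sunGraph k).dist (Sum.inr i) (Sum.inl j))
      + 2 = 2 * k := by
    have key : ∀ j : Fin k,
        (sunGraph k).dist (Sum.inr i) (Sum.inl j)
          + ((if j = i then 1 else 0) + (if j = i + 1 then 1 else 0)) = 2 := by
      intro j
      rw [sun_dist_inl hk i j]
      have := sun_succ_ne hk i
      split_ifs <;> simp_all
    calc (∑ j : Fin k, (sunGraph k).dist (Sum.inr i) (Sum.inl j)) + 2
        = ∑ j : Fin k, ((sunGraph k).dist (Sum.inr i) (Sum.inl j)
            + ((if j = i then 1 else 0) + (if j = i + 1 then 1 else 0))) := by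
          rw [Finset.sum_add_distrib, Finset.sum_add_distrib,
            Finset.sum_ite_eq' Finset.univ i (fun _ => 1),
            Finset.sum_ite_eq' Finset.univ (i + 1) (fun _ => 1)]
          simp
      _ = 2 * k := by rw [Finset.sum_congr rfl (fun j _ => key j)]; simp [mul_comm]
  have hS2 : (∑ j : Fin k, (sunGraph k).dist (Sum.inr i) (Sum.inr j))
      + 5 = 3 * k := by
    have key : ∀ j : Fin k,
        (sunGraph k).dist (Sum.inr i) (Sum.inr j)
          + ((if j = i then 3 else 0) + ((if j = i + 1 then 1 else 0)
            + (if j = i - 1 then 1 else 0))) = 3 := by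
      intro j
      rw [sun_dist_inr hk i j]
      have := sun_succ_ne hk i
      have := sun_pred_ne hk i
      have := sun_succ_ne_pred hk i
      split_ifs <;> simp_all
    calc (∑ j : Fin k, (sunGraph k).dist (Sum.inr i) (Sum.inr j)) + 5
        = ∑ j : Fin k, ((sunGraph k).dist (Sum.inr i) (Sum.inr j)
            + ((if j = i then 3 else 0) + ((if j = i + 1 then 1 else 0)
              + (if j = i - 1 then 1 else 0)))) := by
          rw [Finset.sum_add_distrib, Finset.sum_add_distrib, Finset.sum_add_distrib,
            Finset.sum_ite_eq' Finset.univ i (fun _ => 3),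
            Finset.sum_ite_eq' Finset.univ (i + 1) (fun _ => 1),
            Finset.sum_ite_eq' Finset.univ (i - 1) (fun _ => 1)]
          simp
      _ = 3 * k := by rw [Finset.sum_congr rfl (fun j _ => key j)]; simp [mul_comm]
  omega
end

section
/- Let k ≥ 3 and let G be the k-sun graph. Then the Hosoya (Wiener) polynomial of G satisfies H(G,t) = (k(k+3)/2)·t + k(k−1)·t² + (k(k−3)/2)·t³, i.e., d(G,1) = k(k+3)/2, d(G,2) = k(k−1), d(G,3) = k(k−3)/2, and d(G,j) = 0 for all j ≥ 4. -/
namespace SunAux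

open Finset

lemma modA {k a : ℕ} (h : a < k) : (a + 1) % k = if a + 1 = k then 0 else a + 1 := by
  split
  · next h' => rw [h', Nat.mod_self]
  · exact Nat.mod_eq_of_lt (by omega)

lemma modB {k a : ℕ} (hk : 0 < k) (h : a < k) :
    (a + (k - 1)) % k = if a = 0 then k - 1 else a - 1 := by
  split
  · next h' => subst h'; rw [Nat.zero_add, Nat.mod_eq_of_lt (by omega)]
  · next h' =>
      have e : a + (k - 1) = (a - 1) + 1 * k := by omega
      rw [e, Nat.add_mul_mod_self_right, Nat.mod_eq_of_lt (by omega)]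

variable {k : ℕ}

/-- successor vertex index -/
def nxt (hk : 3 ≤ k) (i : Fin k) : Fin k := ⟨((i : ℕ) + 1) % k, Nat.mod_lt _ (by omega)⟩

/-- predecessor vertex index -/
def prv (hk : 3 ≤ k) (i : Fin k) : Fin k := ⟨((i : ℕ) + (k - 1)) % k, Nat.mod_lt _ (by omega)⟩

lemma nxt_ne (hk : 3 ≤ k) (i : Fin k) : nxt hk i ≠ i := by
  have h := modA (a := (i : ℕ)) i.isLt
  intro h'
  have := Fin.val_eq_val (nxt hk i) i |>.mpr h'
  simp only [nxt] at this
  rw [h] at this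
  split at this <;> omega

lemma prv_ne (hk : 3 ≤ k) (i : Fin k) : prv hk i ≠ i := by
  have h := modB (a := (i : ℕ)) (by omega) i.isLt
  intro h'
  have := Fin.val_eq_val (prv hk i) i |>.mpr h'
  simp only [prv] at this
  rw [h] at this
  split at this <;> omega

lemma prv_ne_nxt (hk : 3 ≤ k) (i : Fin k) : prv hk i ≠ nxt hk i := by
  have h1 := modA (a := (i : ℕ)) i.isLt
  have h2 := modB (a := (i : ℕ)) (k := k) (by omega) i.isLt
  intro h'
  have hlt := i.isLt
  have hv := Fin.val_eq_val (prv hk i) (nxt hk i) |>.mpr h'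
  simp only [prv, nxt] at hv
  rw [h1, h2] at hv
  split at hv <;> split at hv <;> omega

/-- `(i:ℕ) = (j+1) % k` iff `j = prv i`. -/
lemma eq_prv_iff (hk : 3 ≤ k) (i j : Fin k) :
    (i : ℕ) = ((j : ℕ) + 1) % k ↔ j = prv hk i := by
  have h1 := modA (a := (j : ℕ)) j.isLt
  have h2 := modB (a := (i : ℕ)) (k := k) (by omega) i.isLt
  rw [← Fin.val_eq_val]
  simp only [prv]
  rw [h1, h2]
  have hi := i.isLt
  have hj := j.isLt
  constructor <;> intro h <;> (split at h <;> split <;> omega)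

/-- injectivity of successor mod k -/
lemma succ_mod_inj (hk : 3 ≤ k) {i j : Fin k}
    (h : ((i : ℕ) + 1) % k = ((j : ℕ) + 1) % k) : i = j := by
  have h1 := modA (a := (i : ℕ)) i.isLt
  have h2 := modA (a := (j : ℕ)) j.isLt
  rw [h1, h2] at h
  rw [← Fin.val_eq_val]
  have hi := i.isLt
  have hj := j.isLt
  split at h <;> split at h <;> omega

lemma card_pair {a b : Fin k} (h : a ≠ b) :
    (univ.filter fun j => j = a ∨ j = b).card = 2 := by
  have e : (univ.filter fun j : Fin k => j = a ∨ j = b) = {a, b} := by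
    ext j; simp
  rw [e, card_insert_of_notMem (by simp [h]), card_singleton]

lemma card_filter_ne (i : Fin k) :
    (univ.filter fun j : Fin k => j ≠ i).card = k - 1 := by
  have e : (univ.filter fun j : Fin k => j ≠ i) = univ.erase i := by
    ext j; simp [Finset.mem_erase]
  rw [e, card_erase_of_mem (mem_univ i)]
  simp

/-- decompose a filter card over a sum type -/
lemma card_filter_sum_type {α β : Type*} [Fintype α] [Fintype β] [DecidableEq α] [DecidableEq β]
    (P : α ⊕ β → Prop) [DecidablePred P] :
    (univ.filter P).card
      = (univ.filter fun a => P (Sum.inl a)).card + (univ.filter fun b => P (Sum.inr b)).card := by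
  rw [Finset.card_filter, Fintype.sum_sum_type, ← Finset.card_filter, ← Finset.card_filter]

/-- decompose a filter card over a product type -/
lemma card_filter_prod {α β : Type*} [Fintype α] [Fintype β]
    (Q : α × β → Prop) [DecidablePred Q] :
    (univ.filter Q).card = ∑ a : α, (univ.filter fun b => Q (a, b)).card := by
  rw [Finset.card_filter, Fintype.sum_prod_type]
  exact Finset.sum_congr rfl fun a _ => (Finset.card_filter _ _).symm

/-- double counting: ordered pairs vs unordered pairs, when the predicate excludes diagonal. -/
lemma two_mul_card_sym2 {α : Type*} [Fintype α] [DecidableEq α]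
    (P : Sym2 α → Prop) [DecidablePred P] (hP : ∀ e, P e → ¬ e.IsDiag) :
    (univ.filter fun p : α × α => P (Sym2.mk.uncurry p)).card = 2 * (univ.filter P).card := by
  rw [Finset.card_eq_sum_card_fiberwise (f := Sym2.mk.uncurry) (t := univ.filter P)
    (fun p hp => Finset.mem_filter.mpr ⟨Finset.mem_univ _, (Finset.mem_filter.mp hp).2⟩)]
  rw [mul_comm, ← smul_eq_mul, ← Finset.sum_const]
  apply Finset.sum_congr rfl
  intro e he
  have heP : P e := (Finset.mem_filter.mp he).2
  clear he
  revert heP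
  induction e using Sym2.ind with
  | _ a b =>
    intro heP
    have hab : a ≠ b := fun h => hP _ heP (by simp [h])
    rw [Finset.filter_filter]
    have e2 : (univ.filter fun p : α × α => P (Sym2.mk.uncurry p) ∧ Sym2.mk.uncurry p = s(a, b))
        = ({(a, b), (b, a)} : Finset (α × α)) := by
      ext ⟨x, y⟩
      simp only [Finset.mem_filter, Finset.mem_univ, true_and, Finset.mem_insert,
        Finset.mem_singleton, Prod.mk.injEq]
      constructor
      · rintro ⟨-, h⟩
        rw [show Sym2.mk.uncurry (x, y) = s(x, y) from rfl, Sym2.eq_iff] at h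
        tauto
      · rintro (⟨h1, h2⟩ | ⟨h1, h2⟩) <;> subst h1 <;> subst h2
        · exact ⟨heP, rfl⟩
        · exact ⟨by rw [show Sym2.mk.uncurry (x, y) = s(x, y) from rfl, Sym2.eq_swap]; exact heP,
            Sym2.eq_swap⟩
    rw [e2, Finset.card_insert_of_notMem (by simp [hab]), Finset.card_singleton]



open Finset SimpleGraph

variable {k : ℕ}

lemma eq_nxt_iff (hk : 3 ≤ k) (i j : Fin k) :
    (j : ℕ) = ((i : ℕ) + 1) % k ↔ j = nxt hk i :=
  ⟨fun h => Fin.ext h, fun h => h ▸ rfl⟩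

lemma lr_cond_iff (hk : 3 ≤ k) (i j : Fin k) :
    (i = j ∨ (i : ℕ) = ((j : ℕ) + 1) % k) ↔ (j = i ∨ j = prv hk i) :=
  ⟨fun h => h.imp Eq.symm (eq_prv_iff hk i j).mp,
   fun h => h.imp Eq.symm (eq_prv_iff hk i j).mpr⟩

lemma rl_cond_iff (hk : 3 ≤ k) (i j : Fin k) :
    (j = i ∨ (j : ℕ) = ((i : ℕ) + 1) % k) ↔ (j = i ∨ j = nxt hk i) :=
  ⟨fun h => h.imp id (eq_nxt_iff hk i j).mp,
   fun h => h.imp id (eq_nxt_iff hk i j).mpr⟩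

lemma rr2_iff (hk : 3 ≤ k) (i j : Fin k) :
    (¬ i = j ∧ ((i : ℕ) = ((j : ℕ) + 1) % k ∨ (j : ℕ) = ((i : ℕ) + 1) % k)) ↔
      (j = prv hk i ∨ j = nxt hk i) := by
  rw [eq_prv_iff hk, eq_nxt_iff hk]
  constructor
  · exact fun h => h.2
  · rintro (rfl | rfl)
    · exact ⟨fun hh => prv_ne hk i hh.symm, Or.inl rfl⟩
    · exact ⟨fun hh => nxt_ne hk i hh.symm, Or.inr rfl⟩

lemma sun_dist_ll (i j : Fin k) :
    (sunGraph k).dist (Sum.inl i) (Sum.inl j) = if i = j then 0 else 1 := by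
  split
  · next h => rw [h, SimpleGraph.dist_self]
  · next h => exact SimpleGraph.dist_eq_one_iff_adj.mpr h

lemma sun_dist_lr (j i : Fin k) :
    (sunGraph k).dist (Sum.inl j) (Sum.inr i)
      = if (j = i ∨ (j : ℕ) = ((i : ℕ) + 1) % k) then 1 else 2 := by
  split
  · next h => exact SimpleGraph.dist_eq_one_iff_adj.mpr h
  · next h =>
    have hji : j ≠ i := fun hh => h (Or.inl hh)
    let w : (sunGraph k).Walk (Sum.inl j) (Sum.inr i) :=
      SimpleGraph.Walk.cons (show (sunGraph k).Adj (Sum.inl j) (Sum.inl i) from hji)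
        (SimpleGraph.Walk.cons (show (sunGraph k).Adj (Sum.inl i) (Sum.inr i) from Or.inl rfl)
          SimpleGraph.Walk.nil)
    have hle : (sunGraph k).dist (Sum.inl j) (Sum.inr i) ≤ 2 := by
      have hd := SimpleGraph.dist_le w
      rwa [show w.length = 2 from rfl] at hd
    have h0 : (sunGraph k).dist (Sum.inl j) (Sum.inr i) ≠ 0 := by
      rw [SimpleGraph.dist_ne_zero_iff_ne_and_reachable]
      exact ⟨by simp, ⟨w⟩⟩
    have h1 : (sunGraph k).dist (Sum.inl j) (Sum.inr i) ≠ 1 :=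
      fun hh => h (SimpleGraph.dist_eq_one_iff_adj.mp hh)
    omega

lemma sun_dist_rr (hk : 3 ≤ k) (i j : Fin k) :
    (sunGraph k).dist (Sum.inr i) (Sum.inr j)
      = if i = j then 0
        else if ((i : ℕ) = ((j : ℕ) + 1) % k ∨ (j : ℕ) = ((i : ℕ) + 1) % k) then 2 else 3 := by
  split
  · next h => rw [h, SimpleGraph.dist_self]
  · next hij =>
    let w3 : (sunGraph k).Walk (Sum.inr i) (Sum.inr j) :=
      SimpleGraph.Walk.cons (show (sunGraph k).Adj (Sum.inr i) (Sum.inl i) from Or.inl rfl)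
        (SimpleGraph.Walk.cons (show (sunGraph k).Adj (Sum.inl i) (Sum.inl j) from hij)
          (SimpleGraph.Walk.cons (show (sunGraph k).Adj (Sum.inl j) (Sum.inr j) from Or.inl rfl)
            SimpleGraph.Walk.nil))
    have h0 : (sunGraph k).dist (Sum.inr i) (Sum.inr j) ≠ 0 := by
      rw [SimpleGraph.dist_ne_zero_iff_ne_and_reachable]
      refine ⟨?_, ⟨w3⟩⟩
      simpa using fun hh => hij hh
    have h1 : (sunGraph k).dist (Sum.inr i) (Sum.inr j) ≠ 1 := by
      intro hh
      exact SimpleGraph.dist_eq_one_iff_adj.mp hh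
    split
    · next hc =>
      have hle : (sunGraph k).dist (Sum.inr i) (Sum.inr j) ≤ 2 := by
        rcases hc with h | h
        · have hd := SimpleGraph.dist_le (SimpleGraph.Walk.cons
            (show (sunGraph k).Adj (Sum.inr i) (Sum.inl i) from Or.inl rfl)
            (SimpleGraph.Walk.cons
              (show (sunGraph k).Adj (Sum.inl i) (Sum.inr j) from Or.inr h)
              SimpleGraph.Walk.nil))
          simpa using hd
        · have hd := SimpleGraph.dist_le (SimpleGraph.Walk.cons
            (show (sunGraph k).Adj (Sum.inr i) (Sum.inl j) from Or.inr h)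
            (SimpleGraph.Walk.cons
              (show (sunGraph k).Adj (Sum.inl j) (Sum.inr j) from Or.inl rfl)
              SimpleGraph.Walk.nil))
          simpa using hd
      omega
    · next hc =>
      have hle : (sunGraph k).dist (Sum.inr i) (Sum.inr j) ≤ 3 := by
        have hd := SimpleGraph.dist_le w3
        rwa [show w3.length = 3 from rfl] at hd
      have h2 : (sunGraph k).dist (Sum.inr i) (Sum.inr j) ≠ 2 := by
        intro hh
        obtain ⟨p, hp⟩ := SimpleGraph.exists_walk_of_dist_ne_zero h0
        rw [hh] at hp
        cases p with
        | nil => simp at hp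
        | cons ha q =>
          rename_i m
          cases q with
          | nil => simp at hp
          | cons hb r =>
            cases r with
            | nil =>
              cases m with
              | inr n => exact ha
              | inl n =>
                have ha' : n = i ∨ (n : ℕ) = ((i : ℕ) + 1) % k := ha
                have hb' : n = j ∨ (n : ℕ) = ((j : ℕ) + 1) % k := hb
                rcases ha' with h1' | h1' <;> rcases hb' with h2' | h2'
                · exact hij (h1' ▸ h2' ▸ rfl)
                · exact hc (Or.inl (h1' ▸ h2'))
                · exact hc (Or.inr (h2' ▸ h1'))
                · exact hij (succ_mod_inj hk (h1'.symm.trans h2'))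
            | cons hc2 r2 => simp [SimpleGraph.Walk.length_cons] at hp
      omega

lemma sun_dist_le_three (hk : 3 ≤ k) (u v : Fin k ⊕ Fin k) :
    (sunGraph k).dist u v ≤ 3 := by
  cases u with
  | inl i =>
    cases v with
    | inl j => rw [sun_dist_ll]; split <;> omega
    | inr j => rw [sun_dist_lr]; split <;> omega
  | inr i =>
    cases v with
    | inl j => rw [SimpleGraph.dist_comm, sun_dist_lr]; split <;> omega
    | inr j =>
      rw [sun_dist_rr hk]
      split
      · omega
      · split <;> omega

lemma sunDist_mk (u v : Fin k ⊕ Fin k) :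
    sunDist k (Sym2.mk u v) = (sunGraph k).dist u v := rfl

lemma sunDist_diag (e : Sym2 (Fin k ⊕ Fin k)) (h : e.IsDiag) : sunDist k e = 0 := by
  induction e using Sym2.ind with
  | _ x y =>
    rw [Sym2.mk_isDiag_iff] at h
    subst h
    exact SimpleGraph.dist_self

/-! ### per-vertex counts -/

lemma card_neg_of (m : ℕ) (P : Fin k → Prop) [DecidablePred P]
    (h : (univ.filter P).card = m) :
    (univ.filter fun j : Fin k => ¬ P j).card = k - m := by
  have := Finset.card_filter_add_card_filter_not (s := (univ : Finset (Fin k))) (p := P)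
  rw [h, Finset.card_univ, Fintype.card_fin] at this
  omega

lemma card_triple {a b c : Fin k} (hab : a ≠ b) (hac : a ≠ c) (hbc : b ≠ c) :
    (univ.filter fun j => j = a ∨ j = b ∨ j = c).card = 3 := by
  have e : (univ.filter fun j : Fin k => j = a ∨ j = b ∨ j = c) = {a, b, c} := by
    ext j; simp
  rw [e, card_insert_of_notMem (by simp [hab, hac]),
    card_insert_of_notMem (by simp [hbc]), card_singleton]

section counts

lemma L1ll (hk : 3 ≤ k) (i : Fin k) : (univ.filter fun j : Fin k => (sunGraph k).dist (.inl i) (.inl j) = 1).card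
    = k - 1 := by
  have e : ∀ j : Fin k, (sunGraph k).dist (.inl i) (.inl j) = 1 ↔ j ≠ i := by
    intro j
    rw [sun_dist_ll]
    split <;> simp_all [eq_comm]
  rw [Finset.filter_congr fun j _ => e j]
  exact card_filter_ne i

lemma L1lr (hk : 3 ≤ k) (i : Fin k) : (univ.filter fun j : Fin k => (sunGraph k).dist (.inl i) (.inr j) = 1).card
    = 2 := by
  have e : ∀ j : Fin k, (sunGraph k).dist (.inl i) (.inr j) = 1 ↔ (j = i ∨ j = prv hk i) := by
    intro j
    rw [sun_dist_lr, ← lr_cond_iff hk i j]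
    split <;> simp_all
  rw [Finset.filter_congr fun j _ => e j]
  exact card_pair (Ne.symm (prv_ne hk i))

lemma L1rl (hk : 3 ≤ k) (i : Fin k) : (univ.filter fun j : Fin k => (sunGraph k).dist (.inr i) (.inl j) = 1).card
    = 2 := by
  have e : ∀ j : Fin k, (sunGraph k).dist (.inr i) (.inl j) = 1 ↔ (j = i ∨ j = nxt hk i) := by
    intro j
    rw [SimpleGraph.dist_comm, sun_dist_lr, ← rl_cond_iff hk i j]
    split <;> simp_all
  rw [Finset.filter_congr fun j _ => e j]
  exact card_pair (Ne.symm (nxt_ne hk i))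

lemma L1rr (hk : 3 ≤ k) (i : Fin k) : (univ.filter fun j : Fin k => (sunGraph k).dist (.inr i) (.inr j) = 1).card
    = 0 := by
  have e : ∀ j : Fin k, ((sunGraph k).dist (.inr i) (.inr j) = 1) ↔ False := by
    intro j
    rw [sun_dist_rr hk]
    split
    · simp
    · split <;> simp
  rw [Finset.filter_congr fun j _ => e j]
  simp

lemma L2ll (hk : 3 ≤ k) (i : Fin k) : (univ.filter fun j : Fin k => (sunGraph k).dist (.inl i) (.inl j) = 2).card
    = 0 := by
  have e : ∀ j : Fin k, ((sunGraph k).dist (.inl i) (.inl j) = 2) ↔ False := by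
    intro j
    rw [sun_dist_ll]
    split <;> simp
  rw [Finset.filter_congr fun j _ => e j]
  simp

lemma L2lr (hk : 3 ≤ k) (i : Fin k) : (univ.filter fun j : Fin k => (sunGraph k).dist (.inl i) (.inr j) = 2).card
    = k - 2 := by
  have e : ∀ j : Fin k, (sunGraph k).dist (.inl i) (.inr j) = 2 ↔
      ¬ (j = i ∨ j = prv hk i) := by
    intro j
    rw [sun_dist_lr, ← lr_cond_iff hk i j]
    split <;> simp_all
  rw [Finset.filter_congr fun j _ => e j]
  exact card_neg_of 2 _ (card_pair (Ne.symm (prv_ne hk i)))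

lemma L2rl (hk : 3 ≤ k) (i : Fin k) : (univ.filter fun j : Fin k => (sunGraph k).dist (.inr i) (.inl j) = 2).card
    = k - 2 := by
  have e : ∀ j : Fin k, (sunGraph k).dist (.inr i) (.inl j) = 2 ↔
      ¬ (j = i ∨ j = nxt hk i) := by
    intro j
    rw [SimpleGraph.dist_comm, sun_dist_lr, ← rl_cond_iff hk i j]
    split <;> simp_all
  rw [Finset.filter_congr fun j _ => e j]
  exact card_neg_of 2 _ (card_pair (Ne.symm (nxt_ne hk i)))

lemma L2rr (hk : 3 ≤ k) (i : Fin k) : (univ.filter fun j : Fin k => (sunGraph k).dist (.inr i) (.inr j) = 2).card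
    = 2 := by
  have e : ∀ j : Fin k, (sunGraph k).dist (.inr i) (.inr j) = 2 ↔
      (j = prv hk i ∨ j = nxt hk i) := by
    intro j
    rw [sun_dist_rr hk]
    split
    · next h =>
      constructor
      · intro hh; exact absurd hh (by omega)
      · rintro (rfl | rfl)
        · exact absurd h.symm (prv_ne hk i)
        · exact absurd h.symm (nxt_ne hk i)
    · next h =>
      split
      · next hC =>
        constructor
        · intro _; exact (rr2_iff hk i j).mp ⟨h, hC⟩
        · intro _; rfl
      · next hC =>
        constructor
        · intro hh; exact absurd hh (by omega)
        · intro hor; exact absurd ((rr2_iff hk i j).mpr hor).2 hC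
  rw [Finset.filter_congr fun j _ => e j]
  exact card_pair (prv_ne_nxt hk i)

lemma L3ll (hk : 3 ≤ k) (i : Fin k) : (univ.filter fun j : Fin k => (sunGraph k).dist (.inl i) (.inl j) = 3).card
    = 0 := by
  have e : ∀ j : Fin k, ((sunGraph k).dist (.inl i) (.inl j) = 3) ↔ False := by
    intro j
    rw [sun_dist_ll]
    split <;> simp
  rw [Finset.filter_congr fun j _ => e j]
  simp

lemma L3lr (hk : 3 ≤ k) (i : Fin k) : (univ.filter fun j : Fin k => (sunGraph k).dist (.inl i) (.inr j) = 3).card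
    = 0 := by
  have e : ∀ j : Fin k, ((sunGraph k).dist (.inl i) (.inr j) = 3) ↔ False := by
    intro j
    rw [sun_dist_lr]
    split <;> simp
  rw [Finset.filter_congr fun j _ => e j]
  simp

lemma L3rl (hk : 3 ≤ k) (i : Fin k) : (univ.filter fun j : Fin k => (sunGraph k).dist (.inr i) (.inl j) = 3).card
    = 0 := by
  have e : ∀ j : Fin k, ((sunGraph k).dist (.inr i) (.inl j) = 3) ↔ False := by
    intro j
    rw [SimpleGraph.dist_comm, sun_dist_lr]
    split <;> simp
  rw [Finset.filter_congr fun j _ => e j]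
  simp

lemma L3rr (hk : 3 ≤ k) (i : Fin k) : (univ.filter fun j : Fin k => (sunGraph k).dist (.inr i) (.inr j) = 3).card
    = k - 3 := by
  have e : ∀ j : Fin k, (sunGraph k).dist (.inr i) (.inr j) = 3 ↔
      ¬ (j = i ∨ j = prv hk i ∨ j = nxt hk i) := by
    intro j
    rw [sun_dist_rr hk]
    split
    · next h =>
      constructor
      · intro hh; exact absurd hh (by omega)
      · intro hr; exact absurd (Or.inl h.symm) hr
    · next h =>
      split
      · next hC =>
        constructor
        · intro hh; exact absurd hh (by omega)
        · intro hr; exact absurd (Or.inr ((rr2_iff hk i j).mp ⟨h, hC⟩)) hr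
      · next hC =>
        constructor
        · intro _
          rintro (rfl | hor)
          · exact h rfl
          · exact hC ((rr2_iff hk i j).mpr hor).2
        · intro _; rfl
  rw [Finset.filter_congr fun j _ => e j]
  exact card_neg_of 3 _
    (card_triple (Ne.symm (prv_ne hk i)) (Ne.symm (nxt_ne hk i)) (prv_ne_nxt hk i))

end counts

/-- reduce the unordered count to per-vertex ordered counts -/
lemma sym2_to_sum (hk : 3 ≤ k) (d : ℕ) (hd : 1 ≤ d) :
    2 * (univ.filter fun e : Sym2 (Fin k ⊕ Fin k) => sunDist k e = d).card
      = (∑ i : Fin k,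
          ((univ.filter fun j : Fin k => (sunGraph k).dist (.inl i) (.inl j) = d).card
            + (univ.filter fun j : Fin k => (sunGraph k).dist (.inl i) (.inr j) = d).card))
      + (∑ i : Fin k,
          ((univ.filter fun j : Fin k => (sunGraph k).dist (.inr i) (.inl j) = d).card
            + (univ.filter fun j : Fin k => (sunGraph k).dist (.inr i) (.inr j) = d).card)) := by
  rw [← two_mul_card_sym2 (fun e => sunDist k e = d)
    (fun e he => fun hdiag => by
      have he' : sunDist k e = d := he
      rw [sunDist_diag e hdiag] at he'; omega)]
  rw [card_filter_prod (fun p : (Fin k ⊕ Fin k) × (Fin k ⊕ Fin k) => sunDist k (Sym2.mk.uncurry p) = d)]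
  rw [Fintype.sum_sum_type]
  congr 1 <;> refine Finset.sum_congr rfl fun i _ => ?_ <;>
    rw [card_filter_sum_type (P := fun v => sunDist k (Sym2.mk.uncurry (_, v)) = d)] <;> rfl



end SunAux

open SunAux Finset in
/-- For `k ≥ 3`, the Hosoya (Wiener) polynomial of the `k`-sun graph is
`H(G,t) = (k(k+3)/2)·t + k(k-1)·t² + (k(k-3)/2)·t³`: the numbers of unordered pairs
of vertices at distance `1`, `2` and `3` are `k(k+3)/2`, `k(k-1)` and `k(k-3)/2`
respectively, and no pair is at distance `j` for any `j ≥ 4`. -/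
theorem sunGraph_hosoya (k : ℕ) (hk : 3 ≤ k) :
    (Finset.univ.filter
      (fun e : Sym2 (Fin k ⊕ Fin k) => sunDist k e = 1)).card = k * (k + 3) / 2 ∧
    (Finset.univ.filter
      (fun e : Sym2 (Fin k ⊕ Fin k) => sunDist k e = 2)).card = k * (k - 1) ∧
    (Finset.univ.filter
      (fun e : Sym2 (Fin k ⊕ Fin k) => sunDist k e = 3)).card = k * (k - 3) / 2 ∧
    ∀ j : ℕ, 4 ≤ j →
      (Finset.univ.filter
        (fun e : Sym2 (Fin k ⊕ Fin k) => sunDist k e = j)).card = 0 := by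
  have csum : ∀ (f : Fin k → ℕ) (c : ℕ), (∀ i, f i = c) → ∑ i : Fin k, f i = k * c := by
    intro f c h
    rw [Finset.sum_congr rfl fun i _ => h i, Finset.sum_const, Finset.card_univ,
      Fintype.card_fin, smul_eq_mul]
  have e1 : 2 * (univ.filter fun e : Sym2 (Fin k ⊕ Fin k) => sunDist k e = 1).card
      = k * ((k - 1) + 2) + k * (2 + 0) := by
    rw [sym2_to_sum hk 1 (by omega)]
    congr 1
    · exact csum _ _ fun i => by rw [L1ll hk i, L1lr hk i]
    · exact csum _ _ fun i => by rw [L1rl hk i, L1rr hk i]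
  have e2 : 2 * (univ.filter fun e : Sym2 (Fin k ⊕ Fin k) => sunDist k e = 2).card
      = k * (0 + (k - 2)) + k * ((k - 2) + 2) := by
    rw [sym2_to_sum hk 2 (by omega)]
    congr 1
    · exact csum _ _ fun i => by rw [L2ll hk i, L2lr hk i]
    · exact csum _ _ fun i => by rw [L2rl hk i, L2rr hk i]
  have e3 : 2 * (univ.filter fun e : Sym2 (Fin k ⊕ Fin k) => sunDist k e = 3).card
      = k * (0 + 0) + k * (0 + (k - 3)) := by
    rw [sym2_to_sum hk 3 (by omega)]
    congr 1
    · exact csum _ _ fun i => by rw [L3ll hk i, L3lr hk i]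
    · exact csum _ _ fun i => by rw [L3rl hk i, L3rr hk i]
  have hle3 : ∀ u v : Fin k ⊕ Fin k, (sunGraph k).dist u v ≤ 3 := sun_dist_le_three hk
  obtain ⟨m, rfl⟩ : ∃ m, k = m + 3 := ⟨k - 3, by omega⟩
  refine ⟨?_, ?_, ?_, ?_⟩
  · rw [show (m + 3) * (m + 3 + 3)
        = 2 * (univ.filter fun e : Sym2 (Fin (m + 3) ⊕ Fin (m + 3)) =>
            sunDist (m + 3) e = 1).card from by
      rw [e1, show m + 3 - 1 = m + 2 from by omega]; ring]
    exact (Nat.mul_div_cancel_left _ (by norm_num)).symm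
  · have h2 : 2 * ((m + 3) * (m + 3 - 1))
        = 2 * (univ.filter fun e : Sym2 (Fin (m + 3) ⊕ Fin (m + 3)) =>
            sunDist (m + 3) e = 2).card := by
      rw [e2, show m + 3 - 1 = m + 2 from by omega, show m + 3 - 2 = m + 1 from by omega]
      ring
    exact (Nat.eq_of_mul_eq_mul_left (by norm_num) h2).symm
  · rw [show (m + 3) * (m + 3 - 3)
        = 2 * (univ.filter fun e : Sym2 (Fin (m + 3) ⊕ Fin (m + 3)) =>
            sunDist (m + 3) e = 3).card from by
      rw [e3, show m + 3 - 3 = m from by omega]; ring]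
    exact (Nat.mul_div_cancel_left _ (by norm_num)).symm
  · intro j hj
    rw [Finset.card_eq_zero, Finset.filter_eq_empty_iff]
    intro e _
    induction e using Sym2.ind with
    | _ u v =>
      have h3 := hle3 u v
      rw [sunDist_mk]
      omega
end
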